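/- Let x∼y be an edge of G and let p ∈ [0,1]. Then there exists a 1-Lipschitz function φ : V → ℝ taking only integer values (φ(w) ∈ ℤ for all w ∈ V) such that Σ_w φ(w)·(μ_x^p(w) − μ_y^p(w)) = W_1(μ_x^p, μ_y^p). -/

import Mathlib

open scoped Classical

noncomputable def mu {V : Type*} (G : SimpleGraph V) [G.LocallyFinite] (x : V) (p : ℝ) :
    V → ℝ :=
  fun z => if z = x then p else if G.Adj x z then (1 - p) / (G.degree x) else 0

def IsPlan {V : Type*} (π : V × V → ℝ) (μ1 μ2 : V → ℝ) : Prop :=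
  (∀ q, π q ∈ Set.Icc (0 : ℝ) 1) ∧ (Function.support π).Finite ∧
    (∀ u, ∑ᶠ v, π (u, v) = μ1 u) ∧ (∀ v, ∑ᶠ u, π (u, v) = μ2 v)

noncomputable def cost {V : Type*} (G : SimpleGraph V) (π : V × V → ℝ) : ℝ :=
  ∑ᶠ q : V × V, (G.dist q.1 q.2 : ℝ) * π q

noncomputable def W1 {V : Type*} (G : SimpleGraph V) (μ1 μ2 : V → ℝ) : ℝ :=
  sInf (cost G '' {π | IsPlan π μ1 μ2})

noncomputable def kappa {V : Type*} (G : SimpleGraph V) [G.LocallyFinite]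
    (p : ℝ) (x y : V) : ℝ :=
  1 - W1 G (mu G x p) (mu G y p)

def IsLip {V : Type*} (G : SimpleGraph V) (φ : V → ℝ) : Prop :=
  ∀ u v, |φ u - φ v| ≤ (G.dist u v : ℝ)

noncomputable def Fpot {V : Type*} (G : SimpleGraph V) [G.LocallyFinite]
    (x y : V) (φ : V → ℝ) : ℝ :=
  (G.degree y : ℝ) * ∑ z ∈ (G.neighborFinset x).erase y, φ z
    - (G.degree x : ℝ) * ∑ z ∈ (G.neighborFinset y).erase x, φ z

noncomputable def cIdle {V : Type*} (G : SimpleGraph V) [G.LocallyFinite]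
    (x y : V) (j : ℤ) : ℝ :=
  sSup (Fpot G x y ''
    {φ | IsLip G φ ∧ (∀ w, ∃ n : ℤ, φ w = (n : ℝ)) ∧ φ x = (j : ℝ) ∧ φ y = 0})

noncomputable def fIdle {V : Type*} (G : SimpleGraph V) [G.LocallyFinite]
    (x y : V) (j : ℤ) (p : ℝ) : ℝ :=
  (p - (1 - p) / (G.degree y : ℝ)) * (j : ℝ)
    + ((1 - p) / ((G.degree x : ℝ) * (G.degree y : ℝ))) * cIdle G x y j

def IsFinProb {V : Type*} (μ : V → ℝ) : Prop :=
  (∀ v, 0 ≤ μ v) ∧ (Function.support μ).Finite ∧ ∑ᶠ v, μ v = 1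

/-!
Take an optimal transport plan `P`; it exists because the set of plans is compact. Comparing `P`
with the plans `P + εΔ`, for balanced perturbations `Δ`, gives cyclical monotonicity: moving the
mass of finitely many support pairs `(b i, c i)` to `(a i, c i)`, where the rows `a` rearrange the
rows `b`, does not lower the cost. Hence the integer weights
`W u u' = min {d(u,v) - d(u',v) | P(u',v) > 0}` admit no negative closed walk, shortest walks give
an integer potential `ψ`, and its `c`-transform `φ w = min_{P q > 0} (-ψ q.1 - d q + d(q.2, w))`
is integer valued, 1-Lipschitz and satisfies `φ u - φ v = d(u,v)` whenever `P(u,v) > 0`.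
Integrating against `P` then gives `∑ φ (μ₁ - μ₂) = cost P = W₁(μ₁, μ₂)`.
-/

open Function Filter Topology Finset

section Transport

variable {V : Type*} {G : SimpleGraph V} {μ μ1 μ2 : V → ℝ} {π P : V × V → ℝ}

lemma IsFinProb.le_one (hμ : IsFinProb μ) (w : V) : μ w ≤ 1 :=
  hμ.2.2 ▸ single_le_finsum w hμ.2.1 hμ.1

lemma Set.Finite.support_curry {f : V × V → ℝ} (hf : (support f).Finite) (u : V) :
    (support fun v => f (u, v)).Finite :=
  hf.preimage (Prod.mk_right_injective u).injOn

lemma Set.Finite.support_curry_swap {f : V × V → ℝ} (hf : (support f).Finite) (v : V) :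
    (support fun u => f (u, v)).Finite :=
  hf.preimage (Prod.mk_left_injective v).injOn

lemma IsPlan.nonneg (hπ : IsPlan π μ1 μ2) (q : V × V) : 0 ≤ π q := (hπ.1 q).1

lemma IsPlan.le_fst (hπ : IsPlan π μ1 μ2) (q : V × V) : π q ≤ μ1 q.1 :=
  hπ.2.2.1 q.1 ▸ single_le_finsum q.2 (hπ.2.1.support_curry q.1) fun _ => hπ.nonneg _

lemma IsPlan.le_snd (hπ : IsPlan π μ1 μ2) (q : V × V) : π q ≤ μ2 q.2 :=
  hπ.2.2.2 q.2 ▸ single_le_finsum q.1 (hπ.2.1.support_curry_swap q.2) fun _ => hπ.nonneg _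

lemma IsPlan.support_subset (hπ : IsPlan π μ1 μ2) :
    support π ⊆ support μ1 ×ˢ support μ2 := by
  intro q hq
  have hpos : 0 < π q := (hπ.nonneg q).lt_of_ne' hq
  exact ⟨(hpos.trans_le (hπ.le_fst q)).ne', (hpos.trans_le (hπ.le_snd q)).ne'⟩

lemma IsPlan.support_fst_subset (hπ : IsPlan π μ1 μ2) :
    support μ1 ⊆ Prod.fst '' support π := by
  intro u hu
  by_contra h
  refine hu ((hπ.2.2.1 u).symm.trans (finsum_eq_zero_of_forall_eq_zero fun v => ?_))
  by_contra hv
  exact h ⟨(u, v), hv, rfl⟩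

lemma IsPlan.support_snd_subset (hπ : IsPlan π μ1 μ2) :
    support μ2 ⊆ Prod.snd '' support π := by
  intro v hv
  by_contra h
  refine hv ((hπ.2.2.2 v).symm.trans (finsum_eq_zero_of_forall_eq_zero fun u => ?_))
  by_contra hu
  exact h ⟨(u, v), hu, rfl⟩

lemma isPlan_of_nonneg (h0 : ∀ q, 0 ≤ π q) (hfin : (support π).Finite)
    (h1 : ∀ u, ∑ᶠ v, π (u, v) = μ1 u) (h2 : ∀ v, ∑ᶠ u, π (u, v) = μ2 v)
    (hμ1 : ∀ u, μ1 u ≤ 1) : IsPlan π μ1 μ2 :=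
  ⟨fun q => ⟨h0 q, (single_le_finsum q.2 (hfin.support_curry q.1) fun _ => h0 _).trans
    ((h1 q.1).trans_le (hμ1 _))⟩, hfin, h1, h2⟩

lemma isPlan_prod (hμ1 : IsFinProb μ1) (hμ2 : IsFinProb μ2) :
    IsPlan (fun q => μ1 q.1 * μ2 q.2) μ1 μ2 := by
  refine isPlan_of_nonneg (fun q => mul_nonneg (hμ1.1 _) (hμ2.1 _))
    ((hμ1.2.1.prod hμ2.2.1).subset fun q hq => ?_) (fun u => ?_) (fun v => ?_) hμ1.le_one
  · exact ⟨left_ne_zero_of_mul hq, right_ne_zero_of_mul hq⟩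
  · simp only [← mul_finsum, hμ2.2.2, mul_one]
  · simp only [← finsum_mul, hμ1.2.2, one_mul]

lemma IsPlan.finsum_mul_sub (hπ : IsPlan π μ1 μ2) (f : V → ℝ) :
    ∑ᶠ w, f w * (μ1 w - μ2 w) = ∑ᶠ q, (f q.1 - f q.2) * π q := by
  have hfin := hπ.2.1
  have hfin1 : (support fun q : V × V => f q.1 * π q).Finite :=
    hfin.subset (support_mul_subset_right _ _)
  have hfin2 : (support fun q : V × V => f q.2 * π q).Finite :=
    hfin.subset (support_mul_subset_right _ _)
  have hμ1 : (support fun w => f w * μ1 w).Finite :=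
    ((hfin.image Prod.fst).subset hπ.support_fst_subset).subset (support_mul_subset_right _ _)
  have hμ2 : (support fun w => f w * μ2 w).Finite :=
    ((hfin.image Prod.snd).subset hπ.support_snd_subset).subset (support_mul_subset_right _ _)
  have e1 : ∑ᶠ q : V × V, f q.1 * π q = ∑ᶠ w, f w * μ1 w := by
    rw [finsum_curry _ hfin1]
    exact finsum_congr fun u => by rw [← hπ.2.2.1 u, mul_finsum]
  have e2 : ∑ᶠ q : V × V, f q.2 * π q = ∑ᶠ w, f w * μ2 w := by
    have swap : ∑ᶠ q : V × V, f q.2 * π q = ∑ᶠ q : V × V, f q.1 * π q.swap :=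
      (finsum_comp_equiv (Equiv.prodComm V V)).symm
    rw [swap, finsum_curry (fun q : V × V => f q.1 * π q.swap)
      (hfin2.preimage Prod.swap_injective.injOn)]
    exact finsum_congr fun v => by rw [← hπ.2.2.2 v, mul_finsum]; rfl
  simp only [mul_sub, sub_mul]
  rw [finsum_sub_distrib hμ1 hμ2, finsum_sub_distrib hfin1 hfin2, e1, e2]

lemma isCompact_setOf_isPlan (h1 : (support μ1).Finite) (h2 : (support μ2).Finite) :
    IsCompact {π : V × V → ℝ | IsPlan π μ1 μ2} := by
  set s1 := h1.toFinset
  set s2 := h2.toFinset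
  have eq : {π : V × V → ℝ | IsPlan π μ1 μ2} =
      (⋂ q, {π | π q ∈ Set.Icc (0 : ℝ) 1}) ∩ (⋂ q ∈ (↑(s1 ×ˢ s2) : Set (V × V))ᶜ, {π | π q = 0}) ∩
        (⋂ u, {π | ∑ v ∈ s2, π (u, v) = μ1 u}) ∩ (⋂ v, {π | ∑ u ∈ s1, π (u, v) = μ2 v}) := by
    ext π
    simp only [Set.mem_ofPred_eq, Set.mem_inter_iff, Set.mem_iInter, Set.mem_compl_iff,
      Finset.mem_coe]
    constructor
    · intro hπ
      have hK : ∀ q, π q ≠ 0 → q ∈ s1 ×ˢ s2 := fun q hq => by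
        simpa [s1, s2] using hπ.support_subset hq
      refine ⟨⟨⟨hπ.1, fun q hq => by_contra fun h => hq (hK q h)⟩, fun u => ?_⟩, fun v => ?_⟩
      · rw [← hπ.2.2.1 u, finsum_eq_sum_of_support_subset _ fun v hv => ?_]
        exact (Finset.mem_product.1 (hK _ hv)).2
      · rw [← hπ.2.2.2 v, finsum_eq_sum_of_support_subset _ fun u hu => ?_]
        exact (Finset.mem_product.1 (hK _ hu)).1
    · rintro ⟨⟨⟨hIcc, hK⟩, hrow⟩, hcol⟩
      have hK' : ∀ q, π q ≠ 0 → q ∈ s1 ×ˢ s2 := fun q hq => by_contra fun h => hq (hK q h)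
      refine ⟨hIcc, (s1 ×ˢ s2).finite_toSet.subset hK', fun u => ?_, fun v => ?_⟩
      · rw [← hrow u, finsum_eq_sum_of_support_subset _ fun v hv => ?_]
        exact (Finset.mem_product.1 (hK' _ hv)).2
      · rw [← hcol v, finsum_eq_sum_of_support_subset _ fun u hu => ?_]
        exact (Finset.mem_product.1 (hK' _ hu)).1
  refine (isCompact_univ_pi fun _ => isCompact_Icc).of_isClosed_subset ?_
    fun π hπ q _ => hπ.1 q
  rw [eq]
  refine .inter (.inter (.inter ?_ ?_) ?_) ?_
  · exact isClosed_iInter fun q => isClosed_Icc.preimage (continuous_apply q)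
  · exact isClosed_biInter fun q _ => isClosed_eq (continuous_apply q) continuous_const
  · exact isClosed_iInter fun u => isClosed_eq
      (continuous_finsetSum _ fun v _ => continuous_apply _) continuous_const
  · exact isClosed_iInter fun v => isClosed_eq
      (continuous_finsetSum _ fun u _ => continuous_apply _) continuous_const

variable (G) in
def IsOptimalPlan (P : V × V → ℝ) (μ1 μ2 : V → ℝ) : Prop :=
  IsPlan P μ1 μ2 ∧ ∀ π, IsPlan π μ1 μ2 → cost G P ≤ cost G π

variable (G) in
lemma exists_isOptimalPlan (hμ1 : IsFinProb μ1) (hμ2 : IsFinProb μ2) :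
    ∃ P, IsOptimalPlan G P μ1 μ2 := by
  set K := hμ1.2.1.toFinset ×ˢ hμ2.2.1.toFinset
  have hcost : Set.EqOn (cost G) (fun π => ∑ q ∈ K, (G.dist q.1 q.2 : ℝ) * π q)
      {π | IsPlan π μ1 μ2} := fun π hπ =>
    finsum_eq_sum_of_support_subset _ fun q hq => by
      simpa [K] using hπ.support_subset (support_mul_subset_right _ _ hq)
  have hcont : Continuous fun π : V × V → ℝ => ∑ q ∈ K, (G.dist q.1 q.2 : ℝ) * π q :=
    continuous_finsetSum _ fun q _ => continuous_const.mul (continuous_apply q)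
  obtain ⟨P, hP, hmin⟩ := (isCompact_setOf_isPlan hμ1.2.1 hμ2.2.1).exists_isMinOn
    ⟨_, isPlan_prod hμ1 hμ2⟩ (hcont.continuousOn.congr hcost)
  exact ⟨P, hP, fun π hπ => hmin hπ⟩

lemma IsOptimalPlan.W1_eq (hP : IsOptimalPlan G P μ1 μ2) : W1 G μ1 μ2 = cost G P :=
  IsLeast.csInf_eq ⟨⟨P, hP.1, rfl⟩, by rintro _ ⟨π, hπ, rfl⟩; exact hP.2 π hπ⟩

lemma IsOptimalPlan.cost_nonneg (hP : IsOptimalPlan G P μ1 μ2) (hμ1 : ∀ u, μ1 u ≤ 1)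
    {Δ : V × V → ℝ} (hΔ : (support Δ).Finite) (hrow : ∀ u, ∑ᶠ v, Δ (u, v) = 0)
    (hcol : ∀ v, ∑ᶠ u, Δ (u, v) = 0) (hneg : ∀ q, Δ q < 0 → 0 < P q) :
    0 ≤ cost G Δ := by
  -- `P + εΔ` is again a plan for small `ε > 0`
  obtain ⟨ε, hε, hε0⟩ : ∃ ε : ℝ, (∀ q ∈ hΔ.toFinset, 0 ≤ P q + ε * Δ q) ∧ 0 < ε := by
    refine Eventually.exists (f := 𝓝[>] (0 : ℝ))
      (((eventually_all_finset _).2 fun q _ => ?_).and self_mem_nhdsWithin)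
    rcases lt_or_ge (Δ q) 0 with h | h
    · have hcont : Continuous fun ε : ℝ => P q + ε * Δ q := by fun_prop
      exact nhdsWithin_le_nhds (((hcont.tendsto' 0 (P q) (by simp)).eventually
        (eventually_gt_nhds (hneg q h))).mono fun _ h => h.le)
    · filter_upwards [self_mem_nhdsWithin] with ε (hε : 0 < ε)
      exact add_nonneg (hP.1.nonneg q) (mul_nonneg hε.le h)
  have hεΔ : (support fun q => ε * Δ q).Finite := hΔ.subset (support_mul_subset_right _ _)
  have hπ : IsPlan (fun q => P q + ε * Δ q) μ1 μ2 := by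
    refine isPlan_of_nonneg (fun q => ?_) ((hP.1.2.1.union hεΔ).subset (support_add _ _))
      (fun u => ?_) (fun v => ?_) hμ1
    · by_cases hq : Δ q = 0
      · simpa [hq] using hP.1.nonneg q
      · exact hε q (by simpa using hq)
    · rw [finsum_add_distrib (hP.1.2.1.support_curry u) (hεΔ.support_curry u), ← mul_finsum,
        hrow, mul_zero, add_zero, hP.1.2.2.1]
    · rw [finsum_add_distrib (hP.1.2.1.support_curry_swap v) (hεΔ.support_curry_swap v),
        ← mul_finsum, hcol, mul_zero, add_zero, hP.1.2.2.2]
  have hcost : cost G (fun q => P q + ε * Δ q) = cost G P + ε * cost G Δ := by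
    simp only [cost, mul_add, mul_left_comm _ ε]
    rw [finsum_add_distrib (hP.1.2.1.subset (support_mul_subset_right _ _))
      (hΔ.subset ((support_mul_subset_right _ _).trans (support_mul_subset_right _ _))), mul_finsum]
  have := hP.2 _ hπ
  rw [hcost] at this
  exact nonneg_of_mul_nonneg_right (by linarith) hε0

lemma finsum_ite_eq_fst (x : V × V) (u : V) :
    ∑ᶠ v, (if x = (u, v) then (1 : ℝ) else 0) = if x.1 = u then 1 else 0 := by
  rw [finsum_eq_single _ x.2 fun v hv => if_neg fun h => hv (by rw [h])]
  simp [Prod.ext_iff]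

lemma finsum_ite_eq_snd (x : V × V) (v : V) :
    ∑ᶠ u, (if x = (u, v) then (1 : ℝ) else 0) = if x.2 = v then 1 else 0 := by
  rw [finsum_eq_single _ x.1 fun u hu => if_neg fun h => hu (by rw [h])]
  simp [Prod.ext_iff]

lemma cost_ite_eq (x : V × V) : cost G (fun q => if x = q then 1 else 0) = G.dist x.1 x.2 := by
  rw [cost, finsum_eq_single _ x fun q hq => by simp [Ne.symm hq]]
  simp

lemma IsOptimalPlan.sum_dist_le {ι : Type*} [Fintype ι] (hP : IsOptimalPlan G P μ1 μ2)
    (hμ1 : ∀ u, μ1 u ≤ 1) (a b c : ι → V) (hbc : ∀ i, 0 < P (b i, c i))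
    (hab : ∀ u, #{i | a i = u} = #{i | b i = u}) :
    ∑ i, (G.dist (b i) (c i) : ℝ) ≤ ∑ i, (G.dist (a i) (c i) : ℝ) := by
  let δ (x q : V × V) : ℝ := if x = q then 1 else 0
  have hδ : ∀ x, (support (δ x)).Finite := fun x =>
    (Set.finite_singleton x).subset fun q hq => by
      by_contra h
      exact hq (if_neg (Ne.symm h))
  -- move a unit of mass from each `(b i, c i)` to `(a i, c i)`; `hab` balances the rows
  let Δ q := ∑ i, (δ (a i, c i) q - δ (b i, c i) q)
  have hΔ : ∀ i, (support fun q => δ (a i, c i) q - δ (b i, c i) q).Finite := fun i =>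
    ((hδ _).union (hδ _)).subset (support_sub _ _)
  have hrow : ∀ u, ∑ᶠ v, Δ (u, v) = 0 := fun u => by
    rw [finsum_sum_comm _ _ fun i _ => (hΔ i).support_curry u]
    simp only [finsum_sub_distrib ((hδ _).support_curry u) ((hδ _).support_curry u), δ,
      finsum_ite_eq_fst, Finset.sum_sub_distrib]
    rw [← natCast_card_filter, ← natCast_card_filter, hab, sub_self]
  have hcol : ∀ v, ∑ᶠ u, Δ (u, v) = 0 := fun v => by
    rw [finsum_sum_comm _ _ fun i _ => (hΔ i).support_curry_swap v]
    simp only [finsum_sub_distrib ((hδ _).support_curry_swap v) ((hδ _).support_curry_swap v), δ,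
      finsum_ite_eq_snd, sub_self, Finset.sum_const_zero]
  have hneg : ∀ q, Δ q < 0 → 0 < P q := fun q hq => by
    obtain ⟨i, -, hi⟩ := Finset.exists_lt_of_sum_lt (hq.trans_eq (Finset.sum_const_zero).symm)
    have : δ (b i, c i) q ≠ 0 := fun h => by
      simp only [h, sub_zero, δ] at hi
      split_ifs at hi <;> norm_num at hi
    rw [← show (b i, c i) = q from by_contra fun h => this (if_neg h)]
    exact hbc i
  have hcost : cost G Δ = ∑ i, ((G.dist (a i) (c i) : ℝ) - G.dist (b i) (c i)) := by
    rw [cost]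
    simp only [Δ, Finset.mul_sum]
    rw [finsum_sum_comm _ _ fun i _ => (hΔ i).subset (support_mul_subset_right _ _)]
    refine Finset.sum_congr rfl fun i _ => ?_
    simp only [mul_sub]
    rw [finsum_sub_distrib ((hδ _).subset (support_mul_subset_right _ _))
      ((hδ _).subset (support_mul_subset_right _ _))]
    exact congrArg₂ _ (cost_ite_eq _) (cost_ite_eq _)
  have := hP.cost_nonneg hμ1
    ((Finset.univ.finite_toSet.biUnion fun i _ => hΔ i).subset (support_sum _ _)) hrow hcol hneg
  rw [hcost, Finset.sum_sub_distrib] at this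
  linarith

lemma card_filter_castSucc_eq {α : Type*} {n : ℕ} (w : Fin (n + 1) → α)
    (hw : w 0 = w (Fin.last n)) (u : α) :
    #{i : Fin n | w i.castSucc = u} = #{i : Fin n | w i.succ = u} := by
  have h1 := Fin.sum_univ_castSucc fun j => if w j = u then 1 else 0
  have h2 := Fin.sum_univ_succ fun j => if w j = u then 1 else 0
  rw [card_filter, card_filter]
  rw [hw] at h2
  omega

lemma exists_potential_of_closedWalk_nonneg {α : Type*} {U : Set α} {b : α} (hb : b ∈ U)
    (W : α → α → ℤ)
    (hW : ∀ n (w : Fin (n + 1) → α), (∀ i, w i ∈ U) → w 0 = b → w (Fin.last n) = b →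
      0 ≤ ∑ i : Fin n, W (w i.castSucc) (w i.succ)) :
    ∃ ψ : α → ℤ, ∀ u ∈ U, ∀ u' ∈ U, ψ u' ≤ ψ u + W u u' := by
  let walkWeights (u : α) : Set ℤ := {z | ∃ n, ∃ w : Fin (n + 1) → α, (∀ i, w i ∈ U) ∧
    w 0 = b ∧ w (Fin.last n) = u ∧ ∑ i : Fin n, W (w i.castSucc) (w i.succ) = z}
  have snoc : ∀ u z, z ∈ walkWeights u → ∀ u' ∈ U, z + W u u' ∈ walkWeights u' := by
    rintro u _ ⟨n, w, hwU, hw0, hwn, rfl⟩ u' hu'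
    refine ⟨n + 1, Fin.snoc w u', fun i => ?_, ?_, by simp, ?_⟩
    · refine Fin.lastCases ?_ (fun j => ?_) i <;> simp [hu', hwU]
    · exact (Fin.snoc_castSucc (i := 0) ..).trans hw0
    · rw [Fin.sum_univ_castSucc]
      simp only [Fin.succ_castSucc, Fin.snoc_castSucc, Fin.succ_last, Fin.snoc_last, hwn]
  have nonneg : ∀ z ∈ walkWeights b, 0 ≤ z := by
    rintro _ ⟨n, w, hwU, hw0, hwn, rfl⟩
    exact hW n w hwU hw0 hwn
  have zero_mem : (0 : ℤ) ∈ walkWeights b := ⟨0, fun _ => b, fun _ => hb, rfl, rfl, by simp⟩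
  have bdd : ∀ u ∈ U, BddBelow (walkWeights u) := fun u _ =>
    ⟨-W u b, fun z hz => by linarith [nonneg _ (snoc u z hz b hb)]⟩
  refine ⟨fun u => sInf (walkWeights u), fun u hu u' hu' => ?_⟩
  have : sInf (walkWeights u') - W u u' ≤ sInf (walkWeights u) :=
    le_csInf ⟨_, snoc b 0 zero_mem u hu⟩ fun z hz => by
      linarith [csInf_le (bdd u' hu') (snoc u z hz u' hu')]
  linarith

lemma IsOptimalPlan.exists_potential (hP : IsOptimalPlan G P μ1 μ2) (hμ1 : ∀ u, μ1 u ≤ 1) :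
    ∃ ψ : V → ℤ, ∀ q q', 0 < P q → 0 < P q' →
      ψ q.1 - ψ q'.1 ≤ (G.dist q'.1 q.2 : ℤ) - G.dist q.1 q.2 := by
  by_cases hpos : ∃ q, 0 < P q
  swap
  · push Not at hpos
    exact ⟨0, fun q _ hq => absurd hq (hpos q).not_gt⟩
  obtain ⟨q₀, hq₀⟩ := hpos
  let U := {u | ∃ v, 0 < P (u, v)}
  let gap (u u' v : V) : ℤ := G.dist u v - G.dist u' v
  have hmin : ∀ u u', ∃ v, u' ∈ U →
      0 < P (u', v) ∧ ∀ v', 0 < P (u', v') → gap u u' v ≤ gap u u' v' := by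
    intro u u'
    by_cases hu' : u' ∈ U
    · obtain ⟨v, hv, hmin⟩ := Set.exists_min_image {v | 0 < P (u', v)} (gap u u')
        ((hP.1.2.1.support_curry u').subset fun v hv => hv.ne') hu'
      exact ⟨v, fun _ => ⟨hv, hmin⟩⟩
    · exact ⟨u', fun h => absurd h hu'⟩
  choose c hc using hmin
  -- a closed walk of least gaps is an exchange of rows as in `sum_dist_le`
  obtain ⟨ψ, hψ⟩ := exists_potential_of_closedWalk_nonneg (U := U) (b := q₀.1) ⟨q₀.2, hq₀⟩
    (fun u u' => gap u u' (c u u')) fun n w hwU hw0 hwn => by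
      have := hP.sum_dist_le hμ1 (fun i : Fin n => w i.castSucc) (fun i => w i.succ)
        (fun i => c (w i.castSucc) (w i.succ)) (fun i => (hc _ _ (hwU _)).1)
        (card_filter_castSucc_eq w (hw0.trans hwn.symm))
      simp only [gap, Finset.sum_sub_distrib, sub_nonneg]
      exact_mod_cast this
  refine ⟨ψ, fun q q' hq hq' => ?_⟩
  have h1 := hψ q'.1 ⟨q'.2, hq'⟩ q.1 ⟨q.2, hq⟩
  have h2 := (hc q'.1 q.1 ⟨q.2, hq⟩).2 q.2 hq
  simp only [gap] at h1 h2
  linarith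

lemma SimpleGraph.Connected.exists_int_lipschitz_eq_dist_on (hG : G.Connected)
    (Γ : Finset (V × V)) (ψ : V → ℤ)
    (hψ : ∀ q ∈ Γ, ∀ q' ∈ Γ, ψ q.1 - ψ q'.1 ≤ (G.dist q'.1 q.2 : ℤ) - G.dist q.1 q.2) :
    ∃ φ : V → ℤ, (∀ u v, |φ u - φ v| ≤ G.dist u v) ∧ ∀ q ∈ Γ, φ q.1 - φ q.2 = G.dist q.1 q.2 := by
  rcases Γ.eq_empty_or_nonempty with rfl | hΓ
  · exact ⟨0, by simp, by simp⟩
  have tri : ∀ a b c : V, (G.dist a c : ℤ) ≤ (G.dist a b : ℤ) + G.dist b c := fun a b c => by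
    exact_mod_cast hG.dist_triangle
  have comm : ∀ a b : V, (G.dist a b : ℤ) = G.dist b a := fun a b => by
    rw [SimpleGraph.dist_comm]
  let φ (w : V) : ℤ := Γ.inf' hΓ fun q => -ψ q.1 - G.dist q.1 q.2 + G.dist q.2 w
  have le : ∀ q ∈ Γ, ∀ w, φ w ≤ -ψ q.1 - G.dist q.1 q.2 + G.dist q.2 w := fun q hq w =>
    Finset.inf'_le _ hq
  have ge : ∀ q ∈ Γ, ∀ w, -ψ q.1 - G.dist q.1 w ≤ φ w := fun q hq w =>
    Finset.le_inf' _ _ fun q' hq' => by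
      linarith [hψ q' hq' q hq, tri q.1 w q'.2, comm w q'.2]
  refine ⟨φ, fun u v => abs_sub_le_iff.2 ⟨?_, ?_⟩, fun q hq => ?_⟩
  · obtain ⟨q, hq, hφ⟩ := Γ.exists_mem_eq_inf' hΓ fun q => -ψ q.1 - G.dist q.1 q.2 + G.dist q.2 v
    linarith [le q hq u, tri q.2 v u, comm u v]
  · obtain ⟨q, hq, hφ⟩ := Γ.exists_mem_eq_inf' hΓ fun q => -ψ q.1 - G.dist q.1 q.2 + G.dist q.2 u
    linarith [le q hq v, tri q.2 u v]
  · have self : ∀ a : V, (G.dist a a : ℤ) = 0 := by simp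
    linarith [le q hq q.1, ge q hq q.1, le q hq q.2, ge q hq q.2, comm q.1 q.2, self q.1, self q.2]

theorem exists_int_lipschitz_finsum_eq_W1 (hG : G.Connected) (hμ1 : IsFinProb μ1)
    (hμ2 : IsFinProb μ2) :
    ∃ φ : V → ℝ, IsLip G φ ∧ (∀ w, ∃ n : ℤ, φ w = n) ∧
      ∑ᶠ w, φ w * (μ1 w - μ2 w) = W1 G μ1 μ2 := by
  obtain ⟨P, hP⟩ := exists_isOptimalPlan G hμ1 hμ2
  obtain ⟨ψ, hψ⟩ := hP.exists_potential hμ1.le_one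
  have mem : ∀ q, q ∈ hP.1.2.1.toFinset ↔ 0 < P q := fun q => by
    simp [(hP.1.nonneg q).lt_iff_ne']
  obtain ⟨φ, hlip, htight⟩ := hG.exists_int_lipschitz_eq_dist_on hP.1.2.1.toFinset ψ
    fun q hq q' hq' => hψ q q' ((mem q).1 hq) ((mem q').1 hq')
  refine ⟨fun w => φ w, fun u v => by dsimp only; exact_mod_cast hlip u v, fun w => ⟨φ w, rfl⟩, ?_⟩
  rw [hP.1.finsum_mul_sub, hP.W1_eq, cost]
  refine finsum_congr fun q => ?_
  rcases (hP.1.nonneg q).eq_or_lt with h | h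
  · simp [← h]
  · have : (φ q.1 : ℝ) - φ q.2 = G.dist q.1 q.2 := by exact_mod_cast htight q ((mem q).2 h)
    rw [this]

end Transport

lemma isFinProb_mu {V : Type*} {G : SimpleGraph V} [G.LocallyFinite] {x : V}
    (hx : 0 < G.degree x) {p : ℝ} (hp : p ∈ Set.Icc (0 : ℝ) 1) : IsFinProb (mu G x p) := by
  have hd : (0 : ℝ) < G.degree x := by exact_mod_cast hx
  have hsupp : support (mu G x p) ⊆ ↑(insert x (G.neighborFinset x)) := fun z hz => by
    by_contra h
    simp only [Finset.coe_insert, Set.mem_insert_iff, Finset.mem_coe,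
      SimpleGraph.mem_neighborFinset, not_or] at h
    exact hz (by simp [mu, h.1, h.2])
  refine ⟨fun z => ?_, (Finset.finite_toSet _).subset hsupp, ?_⟩
  · unfold mu
    split_ifs
    exacts [hp.1, div_nonneg (by linarith [hp.2]) hd.le, le_rfl]
  · have hnbr : ∀ z ∈ G.neighborFinset x, mu G x p z = (1 - p) / G.degree x := fun z hz => by
      have hadj := (SimpleGraph.mem_neighborFinset _ _ _).1 hz
      simp [mu, hadj, hadj.ne.symm]
    rw [finsum_eq_sum_of_support_subset _ hsupp, Finset.sum_insert (by simp),
      Finset.sum_congr rfl hnbr, Finset.sum_const, SimpleGraph.card_neighborFinset_eq_degree,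
      nsmul_eq_mul, show mu G x p x = p by simp [mu]]
    field_simp
    ring

theorem stmt8 {V : Type*} (G : SimpleGraph V) [G.LocallyFinite] (hG : G.Connected)
    (x y : V) (hxy : G.Adj x y) (p : ℝ) (hp : p ∈ Set.Icc (0 : ℝ) 1) :
    ∃ φ : V → ℝ, IsLip G φ ∧ (∀ w, ∃ n : ℤ, φ w = (n : ℝ)) ∧
      ∑ᶠ w, φ w * (mu G x p w - mu G y p w) = W1 G (mu G x p) (mu G y p) :=
  exists_int_lipschitz_finsum_eq_W1 hG (isFinProb_mu hxy.degree_pos_left hp)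
    (isFinProb_mu hxy.degree_pos_right hp)
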